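/- For the system x' = r x/(1+sy) - d x - a x² - p x y, y' = c p x y + n y - d₁ y², with all parameters positive and with a positive equilibrium (x*(s), y*(s)) depending on the fear parameter s, the coordinates x*(s) and y*(s) are strictly decreasing functions of s. -/
import Mathlib


/-- For x' = r x/(1+sy) - d x - a x² - p x y, y' = c p x y + n y - d₁ y², the
coordinates of the positive equilibrium (solving r/(1+sy) = d + ax + py and
cpx + n = d₁y) are strictly decreasing in the fear parameter s. -/
theorem stmt_11 (r d a p c n d₁ : ℝ)
    (hr : 0 < r) (hd : 0 < d) (ha : 0 < a) (hp : 0 < p) (hc : 0 < c)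
    (hn : 0 < n) (hd₁ : 0 < d₁)
    (s₁ s₂ x₁ y₁ x₂ y₂ : ℝ) (hs₁ : 0 < s₁) (hs : s₁ < s₂)
    (hx₁ : 0 < x₁) (hy₁ : 0 < y₁) (hx₂ : 0 < x₂) (hy₂ : 0 < y₂)
    (heq₁ : r / (1 + s₁ * y₁) = d + a * x₁ + p * y₁ ∧ c * p * x₁ + n = d₁ * y₁)
    (heq₂ : r / (1 + s₂ * y₂) = d + a * x₂ + p * y₂ ∧ c * p * x₂ + n = d₁ * y₂) :
    x₂ < x₁ ∧ y₂ < y₁ := by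
  obtain ⟨h1, h2⟩ := heq₁
  obtain ⟨h3, h4⟩ := heq₂
  have hp1 : (0:ℝ) < 1 + s₁ * y₁ := by positivity
  have hs₂ : 0 < s₂ := hs₁.trans hs
  have hp2 : (0:ℝ) < 1 + s₂ * y₂ := by positivity
  have e1 : r = (d + a * x₁ + p * y₁) * (1 + s₁ * y₁) := by
    field_simp at h1; linarith
  have e2 : r = (d + a * x₂ + p * y₂) * (1 + s₂ * y₂) := by
    field_simp at h3; linarith
  have hx : x₂ < x₁ := by
    by_contra h
    push_neg at h
    have hy : y₁ ≤ y₂ := by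
      have := mul_nonneg (mul_pos hc hp).le (sub_nonneg.mpr h)
      nlinarith
    have hlt : 1 + s₁ * y₁ < 1 + s₂ * y₂ := by nlinarith
    have hA : 0 < d + a * x₁ + p * y₁ := by positivity
    nlinarith [mul_lt_mul_of_pos_left hlt hA,
      mul_le_mul_of_nonneg_right (show d + a * x₁ + p * y₁ ≤ d + a * x₂ + p * y₂ by nlinarith) hp2.le]
  refine ⟨hx, ?_⟩
  nlinarith [mul_pos (mul_pos hc hp) (sub_pos.mpr hx)]
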